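/- arXiv:1705.03157 — 2 statements merged into one kernel-verified Lean document; each statement's English description precedes it below -/
import Mathlib

section
/- Let A, B be n×n complex matrices satisfying -B†A + A†B = 0 and A†A + B†B > 0. Then the matrix U := (B - iA)(B + iA)^{-1} is unitary. -/
open scoped ComplexOrder
open Matrix Complex

theorem stmt1 (n : ℕ) (A B : Matrix (Fin n) (Fin n) ℂ)
    (h1 : -Bᴴ * A + Aᴴ * B = 0) (h2 : (Aᴴ * A + Bᴴ * B).PosDef) :
    ((B - Complex.I • A) * (B + Complex.I • A)⁻¹) ∈ Matrix.unitaryGroup (Fin n) ℂ := by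
  have ha : Bᴴ * A = Aᴴ * B := by
    have := h1
    rw [neg_mul, neg_add_eq_zero] at this
    exact this
  set C : Matrix (Fin n) (Fin n) ℂ := B + Complex.I • A with hCdef
  set D : Matrix (Fin n) (Fin n) ℂ := B - Complex.I • A with hDdef
  have hC : Cᴴ * C = Aᴴ * A + Bᴴ * B := by
    simp only [hCdef, conjTranspose_add, conjTranspose_smul, Complex.star_def, Complex.conj_I,
      add_mul, mul_add, smul_mul_assoc, Matrix.mul_smul, smul_smul, ha,
      neg_mul, Complex.I_mul_I, neg_neg, one_smul, neg_smul, mul_neg]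
    abel
  have hD : Dᴴ * D = Aᴴ * A + Bᴴ * B := by
    simp only [hDdef, sub_eq_add_neg, conjTranspose_add, conjTranspose_neg, conjTranspose_smul,
      Complex.star_def, Complex.conj_I, add_mul, mul_add, smul_mul_assoc, Matrix.mul_smul,
      smul_smul, ha, neg_mul, Complex.I_mul_I, neg_neg, one_smul, neg_smul, mul_neg,
      Matrix.neg_mul, Matrix.mul_neg]
    abel
  have hdet : IsUnit C.det := by
    have h0 : (Cᴴ * C).det ≠ 0 := by rw [hC]; exact h2.det_pos.ne'
    rw [Matrix.det_mul] at h0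
    exact isUnit_iff_ne_zero.mpr fun h => h0 (by simp [h])
  have hCinv : C * C⁻¹ = 1 := Matrix.mul_nonsing_inv C hdet
  rw [Matrix.mem_unitaryGroup_iff']
  have : star ((D : Matrix (Fin n) (Fin n) ℂ) * C⁻¹) * (D * C⁻¹)
      = (C⁻¹)ᴴ * (Dᴴ * D) * C⁻¹ := by
    simp [Matrix.star_eq_conjTranspose, Matrix.conjTranspose_mul, Matrix.mul_assoc]
  rw [this, hD, ← hC]
  calc (C⁻¹)ᴴ * (Cᴴ * C) * C⁻¹ = ((C * C⁻¹)ᴴ) * (C * C⁻¹) := by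
        simp only [Matrix.conjTranspose_mul, Matrix.mul_assoc]
    _ = 1 := by rw [hCinv]; simp
end

section
/- Birman–Schwinger correspondence (abstract form): Let H₀ be self-adjoint with E < 0 in its resolvent set, V₁ a bounded operator, and λ > 0. Then E is an eigenvalue of H₀ - λV₁*V₁ with eigenvector φ if and only if 1/λ is an eigenvalue of the Birman–Schwinger operator B := V₁(H₀ - E)^{-1}V₁* with eigenvector ψ = V₁φ ≠ 0 (assuming V₁φ ≠ 0, which holds since V₁*V₁φ ≠ 0 when E ∉ spec H₀). -/
open Matrix

section aux

variable {n : ℕ} (H₀ V₁ : Matrix (Fin n) (Fin n) ℂ)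

lemma bs_key (E : ℝ) (hres : IsUnit (H₀ - (E : ℂ) • 1)) (lam : ℝ) (hlam : 0 < lam)
    (φ : Fin n → ℂ) (hφ : φ ≠ 0)
    (h : (H₀ - (lam : ℂ) • (V₁ᴴ * V₁)).mulVec φ = (E : ℂ) • φ) :
    V₁.mulVec φ ≠ 0 ∧
      (V₁ * (H₀ - (E : ℂ) • 1)⁻¹ * V₁ᴴ).mulVec (V₁.mulVec φ)
        = (1 / lam : ℂ) • V₁.mulVec φ := by
  set A : Matrix (Fin n) (Fin n) ℂ := H₀ - (E : ℂ) • 1 with hA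
  have hdet : IsUnit A.det := (Matrix.isUnit_iff_isUnit_det A).mp hres
  have hlam0 : (lam : ℂ) ≠ 0 := by
    exact_mod_cast (Complex.ofReal_ne_zero.mpr hlam.ne')
  -- A φ = lam • V₁ᴴ (V₁ φ)
  have hAφ : A.mulVec φ = (lam : ℂ) • V₁ᴴ.mulVec (V₁.mulVec φ) := by
    have := h
    simp only [Matrix.sub_mulVec, Matrix.smul_mulVec, hA, Matrix.one_mulVec,
      Matrix.mulVec_mulVec] at this ⊢
    linear_combination (norm := module) this
  -- φ = A⁻¹ (A φ)
  have hinv : ∀ x : Fin n → ℂ, A⁻¹.mulVec (A.mulVec x) = x := by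
    intro x
    rw [Matrix.mulVec_mulVec, Matrix.nonsing_inv_mul A hdet, Matrix.one_mulVec]
  have hφeq : φ = (lam : ℂ) • A⁻¹.mulVec (V₁ᴴ.mulVec (V₁.mulVec φ)) := by
    rw [← Matrix.mulVec_smul, ← hAφ, hinv]
  have hV₁φ : V₁.mulVec φ ≠ 0 := by
    intro h0
    apply hφ
    rw [hφeq, h0, Matrix.mulVec_zero, Matrix.mulVec_zero, smul_zero]
  refine ⟨hV₁φ, ?_⟩
  have : A⁻¹.mulVec (V₁ᴴ.mulVec (V₁.mulVec φ)) = (1 / lam : ℂ) • φ := by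
    conv_rhs => rw [hφeq]
    rw [smul_smul, one_div, inv_mul_cancel₀ hlam0, one_smul]
  calc (V₁ * A⁻¹ * V₁ᴴ).mulVec (V₁.mulVec φ)
      = V₁.mulVec (A⁻¹.mulVec (V₁ᴴ.mulVec (V₁.mulVec φ))) := by
        simp [Matrix.mulVec_mulVec, Matrix.mul_assoc]
    _ = (1 / lam : ℂ) • V₁.mulVec φ := by rw [this, Matrix.mulVec_smul]

end aux

/-- Birman–Schwinger correspondence (finite-dimensional form): for `E` not an eigenvalue of the
Hermitian matrix `H₀` and `λ > 0`, `E` is an eigenvalue of `H₀ - λ V₁ᴴ V₁` if and only if `1/λ`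
is an eigenvalue of the Birman–Schwinger operator `V₁ (H₀ - E)⁻¹ V₁ᴴ`; moreover the
Birman–Schwinger eigenvector can be taken to be `ψ = V₁ φ ≠ 0`. -/
theorem stmt15 (n : ℕ) (H₀ V₁ : Matrix (Fin n) (Fin n) ℂ) (hH₀ : H₀.IsHermitian)
    (E : ℝ) (hE : E < 0) (hres : IsUnit (H₀ - (E : ℂ) • 1)) (lam : ℝ) (hlam : 0 < lam) :
    ((∃ φ : Fin n → ℂ, φ ≠ 0 ∧ (H₀ - (lam : ℂ) • (V₁ᴴ * V₁)).mulVec φ = (E : ℂ) • φ) ↔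
      (∃ ψ : Fin n → ℂ, ψ ≠ 0 ∧
        (V₁ * (H₀ - (E : ℂ) • 1)⁻¹ * V₁ᴴ).mulVec ψ = (1 / lam : ℂ) • ψ)) ∧
    (∀ φ : Fin n → ℂ, φ ≠ 0 → (H₀ - (lam : ℂ) • (V₁ᴴ * V₁)).mulVec φ = (E : ℂ) • φ →
      V₁.mulVec φ ≠ 0 ∧
      (V₁ * (H₀ - (E : ℂ) • 1)⁻¹ * V₁ᴴ).mulVec (V₁.mulVec φ)
        = (1 / lam : ℂ) • V₁.mulVec φ) := by
  set A : Matrix (Fin n) (Fin n) ℂ := H₀ - (E : ℂ) • 1 with hA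
  have hdet : IsUnit A.det := (Matrix.isUnit_iff_isUnit_det A).mp hres
  have hlam0 : (lam : ℂ) ≠ 0 := by
    exact_mod_cast (Complex.ofReal_ne_zero.mpr hlam.ne')
  have hlaminv : (1 / lam : ℂ) ≠ 0 := one_div_ne_zero hlam0
  constructor
  · constructor
    · rintro ⟨φ, hφ, h⟩
      obtain ⟨h1, h2⟩ := bs_key H₀ V₁ E hres lam hlam φ hφ h
      exact ⟨V₁.mulVec φ, h1, h2⟩
    · rintro ⟨ψ, hψ, hB⟩
      refine ⟨A⁻¹.mulVec (V₁ᴴ.mulVec ψ), ?_, ?_⟩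
      · intro h0
        apply hψ
        have : V₁.mulVec (A⁻¹.mulVec (V₁ᴴ.mulVec ψ)) = (1 / lam : ℂ) • ψ := by
          rw [← hB]; simp [Matrix.mulVec_mulVec, Matrix.mul_assoc]
        rw [h0, Matrix.mulVec_zero] at this
        have := this.symm
        exact (smul_eq_zero.mp this).resolve_left hlaminv
      · have hAmul : A.mulVec (A⁻¹.mulVec (V₁ᴴ.mulVec ψ)) = V₁ᴴ.mulVec ψ := by
          rw [Matrix.mulVec_mulVec, Matrix.mul_nonsing_inv A hdet, Matrix.one_mulVec]
        have hVφ : V₁.mulVec (A⁻¹.mulVec (V₁ᴴ.mulVec ψ)) = (1 / lam : ℂ) • ψ := by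
          rw [← hB]; simp [Matrix.mulVec_mulVec, Matrix.mul_assoc]
        set φ := A⁻¹.mulVec (V₁ᴴ.mulVec ψ) with hφdef
        have hterm : (lam : ℂ) • (V₁ᴴ * V₁).mulVec φ = V₁ᴴ.mulVec ψ := by
          rw [← Matrix.mulVec_mulVec, hVφ, Matrix.mulVec_smul, smul_smul]
          rw [mul_one_div, div_self hlam0, one_smul]
        have : A.mulVec φ = V₁ᴴ.mulVec ψ := hAmul
        simp only [hA, Matrix.sub_mulVec, Matrix.smul_mulVec, Matrix.one_mulVec] at this ⊢
        linear_combination (norm := module) this - hterm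
  · intro φ hφ h
    exact bs_key H₀ V₁ E hres lam hlam φ hφ h
end
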